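/- Let μ be a θ-invariant, θ-ergodic Borel probability measure on ℝ^ℤ. Fix m > 0, let Q : ℝ → {−m, m} be given by Q(z) = m if z ≥ 0 and Q(z) = −m if z < 0, let 𝒮 = mℤ = {km : k ∈ ℤ} ⊆ ℝ, and let F : ℝ × 𝒮 → 𝒮 be F(x, s) = s + Q(x − s) (Δ-modulation). Suppose μ{x : x₀ ≥ m} < 1/2 and μ{x : x₀ ≤ −m} < 1/2. Then the pair process is stochastically stable: there exists a Borel probability measure v on ℝ^ℤ × mℤ whose first marginal equals μ and which is Φ-invariant. -/

import Mathlib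

open MeasureTheory ProbabilityTheory Filter
open scoped ENNReal NNReal

/-- The state space `mℤ = {km : k ∈ ℤ} ⊆ ℝ` of `Δ`-modulation. -/
abbrev mZ (m : ℝ) : Type := {s : ℝ // ∃ k : ℤ, s = (k : ℝ) * m}

/-- The two-level quantizer `Q(z) = m` if `z ≥ 0`, `Q(z) = −m` if `z < 0`. -/
noncomputable def deltaQ (m z : ℝ) : ℝ := if 0 ≤ z then m else -m

/-- The `Δ`-modulation update `F(x, s) = s + Q(x − s)`, mapping `mℤ` to itself. -/
noncomputable def deltaF (m : ℝ) (p : ℝ × mZ m) : mZ m :=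
  ⟨(p.2 : ℝ) + deltaQ m (p.1 - (p.2 : ℝ)), by
    obtain ⟨k, hk⟩ := p.2.2
    unfold deltaQ
    split_ifs
    · exact ⟨k + 1, by push_cast [hk]; ring⟩
    · exact ⟨k - 1, by push_cast [hk]; ring⟩⟩

/-- The skew-product map `Φ(x, s) = (θx, F(x₀, s))`, where `θ` is the left shift. -/
def skewProd {𝒳 𝒮 : Type*} (F : 𝒳 × 𝒮 → 𝒮) (p : (ℤ → 𝒳) × 𝒮) : (ℤ → 𝒳) × 𝒮 :=
  (fun n => p.1 (n + 1), F (p.1 0, p.2))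

open scoped Topology

/-!
Start the chain at state `0` and average the laws of its first `N` steps (Krylov–Bogoliubov).
Since the state space `mℤ` is countable and every fibre is dominated by `μ`, setwise limits of these
averages along an ultrafilter are measures as soon as the state is tight, and such a limit is
invariant because the averages are invariant up to `O(1/N)`.

Tightness: a positive state `s` can only go up when `x₀ ≥ s ≥ m`, so by Lindley's recursion the
state at time `0` is at most `m` plus the largest backward sum of `±m` (with `+m` exactly when
`xₖ ≥ m`). As `μ{x₀ ≥ m} < 1/2` these sums have negative mean, so by the maximal ergodic theorem
and ergodicity they are almost surely bounded above. The lower bound is symmetric.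
-/

section Birkhoff

variable {α : Type*} {T : α → α} {g : α → ℝ}

/-- `max (S₀, …, S_N) = max (0, S₁, …, S_N)` for the Birkhoff sums `Sₙ` of `g` along `T`. -/
noncomputable def birkhoffMax (T : α → α) (g : α → ℝ) (N : ℕ) : α → ℝ :=
  (Finset.range (N + 1)).sup' Finset.nonempty_range_add_one (birkhoffSum T g)

lemma birkhoffSum_le_birkhoffMax {n N : ℕ} (h : n ≤ N) (x : α) :
    birkhoffSum T g n x ≤ birkhoffMax T g N x := by
  rw [birkhoffMax, Finset.sup'_apply]
  exact Finset.le_sup' (fun k => birkhoffSum T g k x) (Finset.mem_range_succ_iff.2 h)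

lemma birkhoffMax_nonneg (N : ℕ) (x : α) : 0 ≤ birkhoffMax T g N x := by
  simpa using birkhoffSum_le_birkhoffMax (T := T) (g := g) N.zero_le x

lemma birkhoffMax_mono (x : α) : Monotone fun N => birkhoffMax T g N x := by
  refine monotone_nat_of_le_succ fun N => ?_
  simp only [birkhoffMax, Finset.sup'_apply]
  exact Finset.sup'_mono (birkhoffSum T g · x) (Finset.range_subset_range.2 (N + 1).le_succ) _

lemma exists_birkhoffMax_pos_iff (x : α) :
    (∃ N, 0 < birkhoffMax T g N x) ↔ ∃ n, 0 < birkhoffSum T g n x := by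
  refine ⟨fun ⟨N, hN⟩ => ?_, fun ⟨n, hn⟩ => ⟨n, hn.trans_le (birkhoffSum_le_birkhoffMax le_rfl x)⟩⟩
  simp only [birkhoffMax, Finset.sup'_apply, Finset.lt_sup'_iff] at hN
  exact hN.imp fun _ => And.right

lemma birkhoffMax_le_max (N : ℕ) (x : α) :
    birkhoffMax T g N x ≤ max 0 (g x + birkhoffMax T g N (T x)) := by
  rw [birkhoffMax, Finset.sup'_apply, Finset.sup'_le_iff]
  rintro (_ | k) hk
  · simp
  · rw [birkhoffSum_succ']
    have hkN : k ≤ N := by simp only [Finset.mem_range] at hk; omega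
    exact le_max_of_le_right (add_le_add_right (birkhoffSum_le_birkhoffMax hkN _) _)

lemma bddAbove_range_birkhoffSum_apply_iff (x : α) :
    BddAbove (Set.range fun n => birkhoffSum T g n (T x)) ↔
      BddAbove (Set.range fun n => birkhoffSum T g n x) := by
  simp only [bddAbove_def, Set.forall_mem_range]
  constructor
  · rintro ⟨B, hB⟩
    refine ⟨max 0 (g x + B), fun n => ?_⟩
    cases n with
    | zero => simp
    | succ k => exact le_max_of_le_right (by rw [birkhoffSum_succ']; linarith [hB k])
  · rintro ⟨B, hB⟩
    refine ⟨B - g x, fun k => ?_⟩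
    have := hB (k + 1)
    rw [birkhoffSum_succ'] at this
    linarith

variable [MeasurableSpace α] {μ : Measure α}

lemma measurable_birkhoffSum (hT : Measurable T) (hg : Measurable g) (n : ℕ) :
    Measurable (birkhoffSum T g n) :=
  Finset.measurable_sum _ fun k _ => hg.comp (hT.iterate k)

lemma measurable_birkhoffMax (hT : Measurable T) (hg : Measurable g) (N : ℕ) :
    Measurable (birkhoffMax T g N) :=
  Finset.sup'_induction _ _ (p := Measurable) (fun _ h₁ _ h₂ => h₁.sup h₂) fun n _ =>
    measurable_birkhoffSum hT hg n

lemma integrable_birkhoffMax (hT : MeasurePreserving T μ μ) (hg : Integrable g μ) (N : ℕ) :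
    Integrable (birkhoffMax T g N) μ :=
  Finset.sup'_induction _ _ (p := (Integrable · μ)) (fun _ h₁ _ h₂ => h₁.sup h₂) fun _ _ =>
    integrable_finsetSum _ fun k _ => (hT.iterate k).integrable_comp_of_integrable hg

/-- The maximal ergodic theorem, by Garsia's argument: on `{M_N > 0}` one has
`g ≥ M_N - M_N ∘ T`, and the right side has nonnegative integral there. -/
theorem MeasureTheory.MeasurePreserving.setIntegral_exists_birkhoffSum_pos_nonneg
    (hT : MeasurePreserving T μ μ) (hgm : Measurable g) (hg : Integrable g μ) :
    0 ≤ ∫ x in {x | ∃ n, 0 < birkhoffSum T g n x}, g x ∂μ := by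
  set M := birkhoffMax T g
  set E : ℕ → Set α := fun N => {x | 0 < M N x}
  have hE : ∀ N, MeasurableSet (E N) := fun N =>
    measurableSet_lt measurable_const (measurable_birkhoffMax hT.measurable hgm N)
  have hstep N : 0 ≤ ∫ x in E N, g x ∂μ := by
    have hM := integrable_birkhoffMax hT hg N
    have hMT : Integrable (fun x => M N (T x)) μ := hT.integrable_comp_of_integrable hM
    have hMT_eq : ∫ x, M N (T x) ∂μ = ∫ x, M N x ∂μ := by
      rw [← integral_map hT.aemeasurable (by rw [hT.map_eq]; exact hM.aestronglyMeasurable),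
        hT.map_eq]
    have hM_eq : ∫ x in E N, M N x ∂μ = ∫ x, M N x ∂μ :=
      setIntegral_eq_integral_of_forall_compl_eq_zero fun x hx =>
        le_antisymm (not_lt.1 hx) (birkhoffMax_nonneg N x)
    have hMT_le : ∫ x in E N, M N (T x) ∂μ ≤ ∫ x, M N (T x) ∂μ :=
      setIntegral_le_integral hMT (.of_forall fun x => birkhoffMax_nonneg N (T x))
    calc 0 ≤ ∫ x in E N, M N x ∂μ - ∫ x in E N, M N (T x) ∂μ := by linarith
      _ = ∫ x in E N, (M N x - M N (T x)) ∂μ := (integral_sub hM.integrableOn hMT.integrableOn).symm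
      _ ≤ ∫ x in E N, g x ∂μ := by
          refine setIntegral_mono_on (hM.sub hMT).integrableOn hg.integrableOn (hE N)
            fun x hx => ?_
          have := (le_max_iff.1 (birkhoffMax_le_max N x)).resolve_left (not_le.2 hx)
          linarith
  have hunion : ⋃ N, E N = {x | ∃ n, 0 < birkhoffSum T g n x} := by
    ext x; simp [E, M, exists_birkhoffMax_pos_iff]
  have hmono : Monotone E := fun a b hab x hx => lt_of_lt_of_le hx (birkhoffMax_mono x hab)
  rw [← hunion]
  exact ge_of_tendsto' (tendsto_setIntegral_of_monotone hE hmono hg.integrableOn) hstep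


/-- The set where the Birkhoff sums are unbounded above is invariant; if it had full measure, the
maximal ergodic theorem would give `0 ≤ ∫ g`. -/
theorem Ergodic.tendsto_measure_exists_birkhoffSum_gt [IsProbabilityMeasure μ]
    (hT : Ergodic T μ) (hgm : Measurable g) (hg : Integrable g μ) (hneg : ∫ x, g x ∂μ < 0) :
    Tendsto (fun R : ℕ => μ {x | ∃ n, (R : ℝ) < birkhoffSum T g n x}) atTop (𝓝 0) := by
  set E := {x | ¬BddAbove (Set.range fun n => birkhoffSum T g n x)}
  have hEm : MeasurableSet E :=
    (measurableSet_bddAbove_range (measurable_birkhoffSum hT.measurable hgm)).compl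
  have hE : μ E = 0 := by
    have hinv : T ⁻¹' E = E := by ext x; exact (bddAbove_range_birkhoffSum_apply_iff x).not
    refine (hT.prob_eq_zero_or_one hEm hinv).resolve_right fun hE1 => not_le.2 hneg ?_
    have hsub : E ⊆ {x | ∃ n, 0 < birkhoffSum T g n x} := fun x hx => by
      obtain ⟨_, ⟨n, rfl⟩, hn⟩ := not_bddAbove_iff.1 hx 0
      exact ⟨n, hn⟩
    have hae : ∀ᵐ x ∂μ, x ∈ {x | ∃ n, 0 < birkhoffSum T g n x} :=
      measure_mono_null (Set.compl_subset_compl.2 hsub) ((prob_compl_eq_zero_iff hEm).2 hE1)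
    simpa [Measure.restrict_eq_self_of_ae_mem hae] using
      hT.toMeasurePreserving.setIntegral_exists_birkhoffSum_pos_nonneg hgm hg
  have hmeas (R : ℕ) : MeasurableSet {x | ∃ n, (R : ℝ) < birkhoffSum T g n x} := by
    simp_rw [Set.ofPred_exists]
    exact .iUnion fun n => measurableSet_lt measurable_const
      (measurable_birkhoffSum hT.measurable hgm n)
  have hanti : Antitone fun R : ℕ => {x | ∃ n, (R : ℝ) < birkhoffSum T g n x} :=
    fun R R' h x ⟨n, hn⟩ => ⟨n, lt_of_le_of_lt (by exact_mod_cast h) hn⟩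
  have hinter : ⋂ R : ℕ, {x | ∃ n, (R : ℝ) < birkhoffSum T g n x} = E := by
    ext x
    simp only [Set.mem_iInter, Set.mem_ofPred_eq, E, not_bddAbove_iff, Set.exists_range_iff]
    refine ⟨fun h B => ?_, fun h R => h R⟩
    obtain ⟨R, hR⟩ := exists_nat_ge B
    exact (h R).imp fun n hn => hR.trans_lt hn
  have := tendsto_measure_iInter_atTop (fun R => (hmeas R).nullMeasurableSet) hanti
    ⟨0, measure_ne_top μ _⟩
  rwa [hinter, hE] at this

end Birkhoff

section SetwiseLimit

variable {α ι : Type*} [MeasurableSpace α]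

/-- Setwise limits along an ultrafilter exist in the compact space `ℝ≥0∞`; domination up to `ε`
by finite measures makes the limit continuous at `∅`, hence countably additive. -/
theorem exists_measure_tendsto_of_le_add (ν : ι → Measure α) (U : Ultrafilter ι)
    (hν : ∀ ε > 0, ∃ κ : Measure α, IsFiniteMeasure κ ∧
      ∀ᶠ i in U, ∀ E, MeasurableSet E → ν i E ≤ κ E + ε) :
    ∃ ρ : Measure α, ∀ E, MeasurableSet E → Tendsto (fun i => ν i E) U (𝓝 (ρ E)) := by
  set L : Set α → ℝ≥0∞ := fun E => (U.map fun i => ν i E).lim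
  have hL E : Tendsto (fun i => ν i E) U (𝓝 (L E)) := (U.map fun i => ν i E).le_nhds_lim
  have hL_le : ∀ ε > 0, ∃ κ : Measure α, IsFiniteMeasure κ ∧
      ∀ E, MeasurableSet E → L E ≤ κ E + ε := fun ε hε => by
    obtain ⟨κ, hκ, hle⟩ := hν ε hε
    exact ⟨κ, hκ, fun E hE => le_of_tendsto (hL E) (hle.mono fun i hi => hi E hE)⟩
  have hC : IsSetRing {s : Set α | MeasurableSet s} :=
    ⟨.empty, fun _ _ => .union, fun _ _ => .diff⟩
  let m : AddContent ℝ≥0∞ {s | MeasurableSet s} := hC.addContent_of_union L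
    (tendsto_nhds_unique (hL ∅) (by simp)) fun _ ht hst => tendsto_nhds_unique (hL _)
      (by simpa only [measure_union hst ht] using (hL _).add (hL _))
  have hm_ne_top : ∀ s ∈ {s : Set α | MeasurableSet s}, m s ≠ ∞ := fun s hs => by
    obtain ⟨κ, hκ, hle⟩ := hL_le 1 one_pos
    exact ((hle s hs).trans_lt (ENNReal.add_lt_top.2 ⟨measure_lt_top κ s, ENNReal.one_lt_top⟩)).ne
  have hm_tendsto : ∀ ⦃s : ℕ → Set α⦄, (∀ n, s n ∈ {s : Set α | MeasurableSet s}) →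
      Antitone s → ⋂ n, s n = ∅ → Tendsto (fun n => m (s n)) atTop (𝓝 0) := by
    intro s hs hanti hempty
    refine ENNReal.tendsto_nhds_zero.2 fun ε hε => ?_
    obtain ⟨κ, hκ, hle⟩ := hL_le (ε / 2) (ENNReal.half_pos hε.ne')
    have hκs : Tendsto (fun n => κ (s n)) atTop (𝓝 0) := by
      simpa [Function.comp_def, hempty] using tendsto_measure_iInter_atTop
        (fun n => (hs n).nullMeasurableSet) hanti ⟨0, measure_ne_top κ _⟩
    filter_upwards [ENNReal.tendsto_nhds_zero.1 hκs (ε / 2) (ENNReal.half_pos hε.ne')] with n hn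
    calc m (s n) ≤ κ (s n) + ε / 2 := hle _ (hs n)
      _ ≤ ε / 2 + ε / 2 := by gcongr
      _ = ε := ENNReal.add_halves ε
  refine ⟨Measure.ofMeasurable (fun E _ => m E) (addContent_empty (m := m))
    fun f hf hd => addContent_iUnion_eq_sum_of_tendsto_zero hC m hm_ne_top hm_tendsto hf
      (MeasurableSet.iUnion hf) hd, fun E hE => ?_⟩
  rw [Measure.ofMeasurable_apply E hE]
  exact hL E

end SetwiseLimit

section Cesaro

variable {α : Type*} [MeasurableSpace α] {Φ : α → α}

noncomputable def cesaroMeasure (Φ : α → α) (ν : Measure α) (N : ℕ) : Measure α :=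
  (N : ℝ≥0∞)⁻¹ • ∑ n ∈ Finset.range N, ν.map Φ^[n]

lemma cesaroMeasure_apply (hΦ : Measurable Φ) (ν : Measure α) (N : ℕ) {E : Set α}
    (hE : MeasurableSet E) :
    cesaroMeasure Φ ν N E = (N : ℝ≥0∞)⁻¹ * ∑ n ∈ Finset.range N, ν (Φ^[n] ⁻¹' E) := by
  simp [cesaroMeasure, Measure.finsetSum_apply, Measure.map_apply (hΦ.iterate _) hE]

lemma cesaroMeasure_apply_le (hΦ : Measurable Φ) (ν : Measure α) (N : ℕ) {E : Set α}
    (hE : MeasurableSet E) {ε : ℝ≥0∞} (hε : ∀ n, ν (Φ^[n] ⁻¹' E) ≤ ε) :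
    cesaroMeasure Φ ν N E ≤ ε := by
  rw [cesaroMeasure_apply hΦ ν N hE]
  rcases N.eq_zero_or_pos with rfl | hN
  · simp
  calc (N : ℝ≥0∞)⁻¹ * ∑ n ∈ Finset.range N, ν (Φ^[n] ⁻¹' E)
      ≤ (N : ℝ≥0∞)⁻¹ * (N * ε) := by
        gcongr
        simpa using Finset.sum_le_sum fun n (_ : n ∈ Finset.range N) => hε n
    _ = ε := by
        rw [← mul_assoc, ENNReal.inv_mul_cancel (by exact_mod_cast hN.ne') (by simp), one_mul]

lemma isFiniteMeasure_cesaroMeasure (hΦ : Measurable Φ) (ν : Measure α) [IsFiniteMeasure ν]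
    (N : ℕ) : IsFiniteMeasure (cesaroMeasure Φ ν N) :=
  ⟨(cesaroMeasure_apply_le hΦ ν N .univ fun _ => measure_mono (Set.subset_univ _)).trans_lt
    (measure_lt_top ν _)⟩

lemma cesaroMeasure_preimage_add (hΦ : Measurable Φ) (ν : Measure α) (N : ℕ) {E : Set α}
    (hE : MeasurableSet E) :
    cesaroMeasure Φ ν N (Φ ⁻¹' E) + (N : ℝ≥0∞)⁻¹ * ν E =
      cesaroMeasure Φ ν N E + (N : ℝ≥0∞)⁻¹ * ν (Φ^[N] ⁻¹' E) := by
  rw [cesaroMeasure_apply hΦ ν N (hΦ hE), cesaroMeasure_apply hΦ ν N hE, ← mul_add, ← mul_add]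
  congr 1
  have hpre n : Φ^[n] ⁻¹' (Φ ⁻¹' E) = Φ^[n + 1] ⁻¹' E := by
    rw [Function.iterate_succ', Set.preimage_comp]
  calc ∑ n ∈ Finset.range N, ν (Φ^[n] ⁻¹' (Φ ⁻¹' E)) + ν E
      = ∑ n ∈ Finset.range (N + 1), ν (Φ^[n] ⁻¹' E) := by simp [Finset.sum_range_succ', hpre]
    _ = _ := Finset.sum_range_succ _ _

/-- Krylov–Bogoliubov: by telescoping, `Φ` moves the `N`-th Cesàro average by `O(1/N)`. -/
theorem map_eq_of_tendsto_cesaroMeasure (hΦ : Measurable Φ) (ν : Measure α) [IsFiniteMeasure ν]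
    {U : Filter ℕ} [U.NeBot] (hU : U ≤ atTop) {ρ : Measure α}
    (hρ : ∀ E, MeasurableSet E → Tendsto (fun N => cesaroMeasure Φ ν N E) U (𝓝 (ρ E))) :
    ρ.map Φ = ρ := by
  ext E hE
  rw [Measure.map_apply hΦ hE]
  have hinv : Tendsto (fun N : ℕ => (N : ℝ≥0∞)⁻¹) U (𝓝 0) :=
    ENNReal.tendsto_inv_nat_nhds_zero.mono_left hU
  have hlast : Tendsto (fun N : ℕ => (N : ℝ≥0∞)⁻¹ * ν (Φ^[N] ⁻¹' E)) U (𝓝 0) := by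
    refine tendsto_of_tendsto_of_tendsto_of_le_of_le tendsto_const_nhds
      (by simpa using ENNReal.Tendsto.mul_const hinv (.inr (measure_ne_top ν Set.univ)))
      (fun _ => zero_le) fun N => by gcongr; exact Set.subset_univ _
  have hfirst : Tendsto (fun N : ℕ => (N : ℝ≥0∞)⁻¹ * ν E) U (𝓝 0) := by
    simpa using ENNReal.Tendsto.mul_const hinv (.inr (measure_ne_top ν E))
  refine tendsto_nhds_unique (f := fun N => cesaroMeasure Φ ν N (Φ ⁻¹' E)
    + (N : ℝ≥0∞)⁻¹ * ν E) (l := U) ?_ ?_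
  · simpa using (hρ _ (hΦ hE)).add hfirst
  · simpa [cesaroMeasure_preimage_add hΦ ν _ hE] using (hρ E hE).add hlast

lemma map_cesaroMeasure_of_semiconj {β : Type*} [MeasurableSpace β] {π : α → β} {θ : β → β}
    {μ : Measure β} (hπ : Measurable π) (hΦ : Measurable Φ) (hθ : MeasurePreserving θ μ μ)
    (hπΦ : Function.Semiconj π Φ θ) {ν : Measure α} (hν : ν.map π = μ) {N : ℕ} (hN : N ≠ 0) :
    (cesaroMeasure Φ ν N).map π = μ := by
  ext A hA
  have hterm n : ν (Φ^[n] ⁻¹' (π ⁻¹' A)) = μ A := by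
    rw [← Set.preimage_comp, (hπΦ.iterate_right n).comp_eq, Set.preimage_comp,
      ← Measure.map_apply hπ ((hθ.iterate n).measurable hA), hν,
      (hθ.iterate n).measure_preimage hA.nullMeasurableSet]
  rw [Measure.map_apply hπ hA, cesaroMeasure_apply hΦ ν N (hπ hA)]
  simp only [hterm, Finset.sum_const, Finset.card_range, nsmul_eq_mul]
  rw [← mul_assoc, ENNReal.inv_mul_cancel (by exact_mod_cast hN) (by simp), one_mul]

end Cesaro

section KrylovBogoliubov

variable {X S : Type*} [MeasurableSpace X] [MeasurableSpace S] [Countable S]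
  [MeasurableSingletonClass S]

theorem MeasureTheory.Measure.le_map_fst_prod_count (ν : Measure (X × S)) [SFinite ν] :
    ν ≤ (ν.map Prod.fst).prod Measure.count := by
  refine Measure.le_iff.2 fun E hE => ?_
  have hfib s : MeasurableSet (E ∩ Prod.snd ⁻¹' {s}) := hE.inter (measurable_snd (.singleton s))
  calc ν E = ∑' s, ν (E ∩ Prod.snd ⁻¹' {s}) := by
        rw [← measure_iUnion (fun s t hst => ?_) hfib, ← Set.inter_iUnion]
        · congr; ext; simp
        · exact Disjoint.mono Set.inter_subset_right Set.inter_subset_right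
            ((Set.disjoint_singleton.2 hst).preimage _)
    _ ≤ ∑' s, ν.map Prod.fst ((·, s) ⁻¹' E) := by
        refine ENNReal.tsum_le_tsum fun s => ?_
        rw [Measure.map_apply measurable_fst (measurable_prodMk_right hE)]
        exact measure_mono fun p ⟨hp, hs⟩ => by
          simp only [Set.mem_preimage, Set.mem_singleton_iff] at hs hp ⊢
          rwa [← hs]
    _ = (ν.map Prod.fst).prod Measure.count E := by
        rw [Measure.prod_apply_symm hE, lintegral_count]

theorem MeasureTheory.Measure.le_prod_count_restrict_add (ν : Measure (X × S)) [SFinite ν]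
    (F : Set S) {E : Set (X × S)} (hE : MeasurableSet E) :
    ν E ≤ (ν.map Prod.fst).prod (Measure.count.restrict F) E + ν (Prod.snd ⁻¹' Fᶜ) := by
  calc ν E ≤ ν (E ∩ Prod.snd ⁻¹' F) + ν (E \ Prod.snd ⁻¹' F) := measure_le_inter_add_sdiff _ _ _
    _ ≤ (ν.map Prod.fst).prod Measure.count (E ∩ Prod.snd ⁻¹' F) + ν (Prod.snd ⁻¹' Fᶜ) :=
        add_le_add (ν.le_map_fst_prod_count _) (measure_mono fun _ hp => hp.2)
    _ = _ := by
        rw [← Set.univ_prod, ← Measure.restrict_apply hE, ← Measure.prod_restrict,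
          Measure.restrict_univ]

/-- Krylov–Bogoliubov over a base: the fibre `S` is countable, so tightness of the fibre
coordinate along the orbit of `ν` replaces compactness. -/
theorem exists_invariant_measure_of_tight {μ : Measure X} [IsProbabilityMeasure μ] {θ : X → X}
    (hθ : MeasurePreserving θ μ μ) {Φ : X × S → X × S} (hΦ : Measurable Φ)
    (hΦθ : Function.Semiconj Prod.fst Φ θ) (ν : Measure (X × S)) [IsProbabilityMeasure ν]
    (hν : ν.map Prod.fst = μ)
    (htight : ∀ ε > 0, ∃ F : Set S, F.Finite ∧ ∀ n, ν (Φ^[n] ⁻¹' (Prod.snd ⁻¹' Fᶜ)) ≤ ε) :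
    ∃ ρ : Measure (X × S), IsProbabilityMeasure ρ ∧ ρ.map Prod.fst = μ ∧ ρ.map Φ = ρ := by
  set U : Ultrafilter ℕ := .of atTop
  have hU : (U : Filter ℕ) ≤ atTop := Ultrafilter.of_le atTop
  have hmarg : ∀ᶠ N in U, (cesaroMeasure Φ ν N).map Prod.fst = μ :=
    (Filter.Eventually.filter_mono hU (eventually_ne_atTop 0)).mono fun N hN =>
      map_cesaroMeasure_of_semiconj measurable_fst hΦ hθ hΦθ hν hN
  obtain ⟨ρ, hρ⟩ : ∃ ρ : Measure (X × S), ∀ E, MeasurableSet E →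
      Tendsto (fun N => cesaroMeasure Φ ν N E) U (𝓝 (ρ E)) := by
    refine exists_measure_tendsto_of_le_add _ U fun ε hε => ?_
    obtain ⟨F, hF, hFε⟩ := htight ε hε
    have : IsFiniteMeasure (Measure.count.restrict F) :=
      ⟨by simpa using Measure.count_apply_lt_top.2 hF⟩
    refine ⟨μ.prod (Measure.count.restrict F), inferInstance, hmarg.mono fun N hN E hE => ?_⟩
    have := isFiniteMeasure_cesaroMeasure hΦ ν N
    calc cesaroMeasure Φ ν N E
        ≤ ((cesaroMeasure Φ ν N).map Prod.fst).prod (Measure.count.restrict F) E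
          + cesaroMeasure Φ ν N (Prod.snd ⁻¹' Fᶜ) := Measure.le_prod_count_restrict_add _ F hE
      _ ≤ μ.prod (Measure.count.restrict F) E + ε := by
          rw [hN]
          gcongr
          exact cesaroMeasure_apply_le hΦ ν N (measurable_snd F.to_countable.measurableSet.compl)
            hFε
  have hlim_of_eventually {E : Set (X × S)} (hE : MeasurableSet E) {c : ℝ≥0∞}
      (h : ∀ᶠ N in U, cesaroMeasure Φ ν N E = c) : ρ E = c :=
    tendsto_nhds_unique (hρ E hE) (tendsto_const_nhds.congr' (h.mono fun _ h => h.symm))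
  have hfst : ρ.map Prod.fst = μ := by
    ext A hA
    rw [Measure.map_apply measurable_fst hA]
    exact hlim_of_eventually (measurable_fst hA) <| hmarg.mono fun N hN => by
      rw [← Measure.map_apply measurable_fst hA, hN]
  refine ⟨ρ, ⟨?_⟩, hfst, map_eq_of_tendsto_cesaroMeasure hΦ ν hU hρ⟩
  rw [← Set.preimage_univ (f := Prod.fst), ← Measure.map_apply measurable_fst .univ, hfst,
    measure_univ]

end KrylovBogoliubov

def shiftEquiv (α : Type*) [MeasurableSpace α] : (ℤ → α) ≃ᵐ (ℤ → α) where
  toFun x n := x (n + 1)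
  invFun x n := x (n - 1)
  left_inv x := by funext n; simp
  right_inv x := by funext n; simp
  measurable_toFun := measurable_pi_lambda _ fun n => measurable_pi_apply (n + 1)
  measurable_invFun := measurable_pi_lambda _ fun n => measurable_pi_apply (n - 1)

lemma ergodic_of_measure_eq_zero_or_one {α : Type*} [MeasurableSpace α] {μ : Measure α}
    [IsProbabilityMeasure μ] {f : α → α} (hf : MeasurePreserving f μ μ)
    (h : ∀ s, MeasurableSet s → f ⁻¹' s = s → μ s = 0 ∨ μ s = 1) : Ergodic f μ :=
  ⟨hf, ⟨fun s hs hfs => eventuallyConst_set'.2 <| (h s hs hfs).imp ae_eq_empty.2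
    fun h1 => ae_eq_univ.2 ((prob_compl_eq_zero_iff hs).2 h1)⟩⟩

lemma measurable_skewProd {𝒳 𝒮 : Type*} [MeasurableSpace 𝒳] [MeasurableSpace 𝒮]
    {F : 𝒳 × 𝒮 → 𝒮} (hF : Measurable F) : Measurable (skewProd F) :=
  ((shiftEquiv 𝒳).measurable.comp measurable_fst).prodMk
    (hF.comp (((measurable_pi_apply 0).comp measurable_fst).prodMk measurable_snd))

lemma semiconj_skewProd {𝒳 𝒮 : Type*} [MeasurableSpace 𝒳] {F : 𝒳 × 𝒮 → 𝒮} :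
    Function.Semiconj Prod.fst (skewProd F) (shiftEquiv 𝒳) := fun _ => rfl

/-- Lindley's bound. The Birkhoff sums of `x ↦ h (x (-1))` along the right shift are the backward
sums `h x₋₁ + ⋯ + h x₋ℓ` of the input read from the current time. -/
theorem skewProd_iterate_le_of_birkhoffSum_le {𝒳 𝒮 : Type*} {F : 𝒳 × 𝒮 → 𝒮} {V : 𝒮 → ℝ}
    {c : ℝ} {h : 𝒳 → ℝ} (hF : ∀ a s, V (F (a, s)) ≤ max c (V s + h a))
    {p : (ℤ → 𝒳) × 𝒮} (hp : V p.2 ≤ c) (n : ℕ) {R : ℝ}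
    (hR : ∀ ℓ, birkhoffSum (fun (x : ℤ → 𝒳) k => x (k - 1)) (fun x => h (x (-1))) ℓ
      ((skewProd F)^[n] p).1 ≤ R) :
    V ((skewProd F)^[n] p).2 ≤ c + R := by
  have hR0 : 0 ≤ R := by simpa using hR 0
  induction n generalizing R with
  | zero => simpa using hp.trans (le_add_of_nonneg_right hR0)
  | succ n ih =>
    set q := (skewProd F)^[n] p
    simp only [Function.iterate_succ_apply', skewProd] at hR ⊢
    have hq : V q.2 ≤ c + (R - h (q.1 0)) := by
      have hR' ℓ : birkhoffSum (fun (x : ℤ → 𝒳) k => x (k - 1)) (fun x => h (x (-1))) ℓ q.1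
          ≤ R - h (q.1 0) := by
        have := hR (ℓ + 1)
        simp only [birkhoffSum_succ', neg_add_cancel, sub_add_cancel] at this
        linarith
      exact ih hR' (by simpa using hR' 0)
    calc V (F (q.1 0, q.2)) ≤ max c (V q.2 + h (q.1 0)) := hF _ _
      _ ≤ max c (c + R) := max_le_max le_rfl (by linarith)
      _ = c + R := max_eq_right (le_add_of_nonneg_right hR0)

section DeltaModulation

variable {m : ℝ}

instance : Zero (mZ m) := ⟨⟨0, 0, by simp⟩⟩

@[simp] lemma mZ.coe_zero : ((0 : mZ m) : ℝ) = 0 := rfl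

instance : Countable (mZ m) :=
  Function.Surjective.countable (f := fun k : ℤ => (⟨k * m, k, rfl⟩ : mZ m)) fun s => by
    obtain ⟨k, hk⟩ := s.2
    exact ⟨k, Subtype.ext hk.symm⟩

lemma mZ.le_neg_or_eq_zero_or_le (hm : 0 < m) (s : mZ m) :
    (s : ℝ) ≤ -m ∨ (s : ℝ) = 0 ∨ m ≤ s := by
  obtain ⟨k, hk⟩ := s.2
  rw [hk]
  rcases lt_trichotomy k 0 with hk | rfl | hk
  · have : (k : ℝ) ≤ -1 := by exact_mod_cast Int.le_sub_one_of_lt hk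
    left; nlinarith
  · simp
  · have : (1 : ℝ) ≤ k := by exact_mod_cast hk
    right; right; nlinarith

lemma mZ.finite_setOf_abs_le (hm : 0 < m) (C : ℝ) : {s : mZ m | |(s : ℝ)| ≤ C}.Finite := by
  refine ((Set.finite_Icc (-⌈C / m⌉) ⌈C / m⌉).image
    fun k : ℤ => (⟨k * m, k, rfl⟩ : mZ m)).subset ?_
  rintro ⟨_, k, rfl⟩ hs
  refine ⟨k, ?_, rfl⟩
  have hk : |(k : ℝ)| ≤ C / m := by
    rwa [le_div_iff₀ hm, ← abs_of_pos hm, ← abs_mul]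
  rw [Set.mem_Icc, ← abs_le]
  exact_mod_cast hk.trans (Int.le_ceil _)

lemma deltaF_le_max (hm : 0 < m) (a : ℝ) (s : mZ m) :
    (deltaF m (a, s) : ℝ) ≤ max m (s + if m ≤ a then m else -m) := by
  change (s : ℝ) + deltaQ m (a - s) ≤ _
  rw [deltaQ]
  rcases mZ.le_neg_or_eq_zero_or_le hm s with hs | hs | hs <;> split_ifs <;>
    first
    | exact le_max_of_le_left (by linarith)
    | exact le_max_of_le_right (by linarith)

lemma neg_deltaF_le_max (hm : 0 < m) (a : ℝ) (s : mZ m) :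
    -(deltaF m (a, s) : ℝ) ≤ max m (-s + if a ≤ -m then m else -m) := by
  change -((s : ℝ) + deltaQ m (a - s)) ≤ _
  rw [deltaQ]
  rcases mZ.le_neg_or_eq_zero_or_le hm s with hs | hs | hs <;> split_ifs <;>
    first
    | exact le_max_of_le_left (by linarith)
    | exact le_max_of_le_right (by linarith)

lemma measurable_deltaF : Measurable (deltaF m) := by
  have hQ : Measurable (deltaQ m) :=
    Measurable.ite (measurableSet_le measurable_const measurable_id) measurable_const
      measurable_const
  exact (measurable_subtype_coe.comp measurable_snd).add
    (hQ.comp (measurable_fst.sub (measurable_subtype_coe.comp measurable_snd))) |>.subtype_mk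

lemma integral_ite_mem_lt_zero {α : Type*} [MeasurableSpace α] {μ : Measure α}
    [IsProbabilityMeasure μ] {B : Set α} [DecidablePred (· ∈ B)] (hB : MeasurableSet B)
    (hμB : μ B < 1 / 2) (hm : 0 < m) : ∫ x, (if x ∈ B then m else -m) ∂μ < 0 := by
  have hB' : μ.real B < 1 / 2 := by
    simpa [Measure.real] using ENNReal.toReal_strict_mono (by simp) hμB
  change ∫ x, B.piecewise (fun _ => m) (fun _ => -m) x ∂μ < 0
  rw [integral_piecewise hB (integrableOn_const (measure_ne_top μ _))
    (integrableOn_const (measure_ne_top μ _)), setIntegral_const, setIntegral_const,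
    probReal_compl_eq_one_sub hB, smul_eq_mul, smul_eq_mul]
  nlinarith

variable {μ : Measure (ℤ → ℝ)} [IsProbabilityMeasure μ]

theorem tendsto_measure_exists_birkhoffSum_sign_gt (hμ : Ergodic (shiftEquiv ℝ) μ) (hm : 0 < m)
    {P : ℝ → Prop} [DecidablePred P] (hP : MeasurableSet {a | P a})
    (hμP : μ {x | P (x 0)} < 1 / 2) :
    Tendsto (fun R : ℕ => μ {x | ∃ ℓ, (R : ℝ) < birkhoffSum (shiftEquiv ℝ).symm
      (fun x => if P (x (-1)) then m else -m) ℓ x}) atTop (𝓝 0) := by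
  have hT := hμ.symm.toMeasurePreserving
  have hmeas : Measurable fun x : ℤ → ℝ => if P (x 0) then m else -m :=
    Measurable.ite (measurable_pi_apply 0 hP) measurable_const measurable_const
  have hint : Integrable (fun x : ℤ → ℝ => if P (x 0) then m else -m) μ :=
    .of_bound hmeas.aestronglyMeasurable m <| .of_forall fun x => by
      split_ifs <;> simp [abs_of_pos hm]
  refine hμ.symm.tendsto_measure_exists_birkhoffSum_gt (hmeas.comp (shiftEquiv ℝ).symm.measurable)
    (hT.integrable_comp_of_integrable hint) ?_
  calc ∫ x, (if P (x (-1)) then m else -m) ∂μ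
      = ∫ x, (fun y : ℤ → ℝ => if P (y 0) then m else -m) ((shiftEquiv ℝ).symm x) ∂μ := rfl
    _ = ∫ x, (if P (x 0) then m else -m) ∂μ :=
        hT.integral_comp' fun y : ℤ → ℝ => if P (y 0) then m else -m
    _ < 0 := integral_ite_mem_lt_zero (B := {x : ℤ → ℝ | P (x 0)}) (measurable_pi_apply 0 hP) hμP hm

/-- By Lindley's bound the state can only leave `[-(m + R), m + R]` when a backward sum of `±m`
exceeds `R`. -/
theorem deltaModulation_tight (hμ : Ergodic (shiftEquiv ℝ) μ) (hm : 0 < m)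
    (h₁ : μ {x | m ≤ x 0} < 1 / 2) (h₂ : μ {x | x 0 ≤ -m} < 1 / 2) {ε : ℝ≥0∞} (hε : 0 < ε) :
    ∃ F : Set (mZ m), F.Finite ∧ ∀ n, μ.map (·, 0)
      ((skewProd (deltaF m))^[n] ⁻¹' (Prod.snd ⁻¹' Fᶜ)) ≤ ε := by
  have hε2 : 0 < ε / 2 := ENNReal.half_pos hε.ne'
  obtain ⟨R, hup, hdown⟩ := ((ENNReal.tendsto_nhds_zero.1
    (tendsto_measure_exists_birkhoffSum_sign_gt hμ hm measurableSet_Ici h₁) _ hε2).and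
    (ENNReal.tendsto_nhds_zero.1
      (tendsto_measure_exists_birkhoffSum_sign_gt hμ hm measurableSet_Iic h₂) _ hε2)).exists
  refine ⟨{s | |(s : ℝ)| ≤ m + R}, mZ.finite_setOf_abs_le hm _, fun n => ?_⟩
  set Φ := skewProd (deltaF m)
  have hΦ : Measurable Φ := measurable_skewProd measurable_deltaF
  rw [Measure.map_apply measurable_prodMk_right
    (hΦ.iterate n (measurable_snd (Set.to_countable _).measurableSet.compl))]
  refine (measure_mono fun x hx => ?_).trans <| ((hμ.iterate n).measure_preimage_le _).trans <|
    (measure_union_le _ _).trans <| (add_le_add hup hdown).trans (ENNReal.add_halves ε).le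
  have hfst : (Φ^[n] (x, 0)).1 = (shiftEquiv ℝ)^[n] x := (semiconj_skewProd.iterate_right n) _
  by_contra hx'
  simp only [Set.mem_preimage, Set.mem_union, Set.mem_ofPred_eq, not_or, not_exists,
    not_lt, ← hfst] at hx'
  have hupper := skewProd_iterate_le_of_birkhoffSum_le (V := fun s : mZ m => (s : ℝ)) (c := m)
    (deltaF_le_max hm) (p := (x, 0)) (by simp [hm.le]) n hx'.1
  have hlower := skewProd_iterate_le_of_birkhoffSum_le (V := fun s : mZ m => -(s : ℝ)) (c := m)
    (neg_deltaF_le_max hm) (p := (x, 0)) (by simp [hm.le]) n hx'.2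
  exact hx (abs_le.2 ⟨by linarith, hupper⟩)

end DeltaModulation

/-- for a stationary ergodic real source with
`μ{x : x₀ ≥ m} < 1/2` and `μ{x : x₀ ≤ −m} < 1/2`, the `Δ`-modulation pair process is
stochastically stable: there is a probability measure on `ℝ^ℤ × mℤ` with first
marginal `μ` invariant under the skew product. -/
theorem deltaModulation_stochastically_stable
    (μ : Measure (ℤ → ℝ)) [IsProbabilityMeasure μ]
    (hinv : μ.map (fun x n => x (n + 1)) = μ)
    (herg : ∀ B : Set (ℤ → ℝ), MeasurableSet B →
      (fun x (n : ℤ) => x (n + 1)) ⁻¹' B = B → μ B = 0 ∨ μ B = 1)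
    (m : ℝ) (hm : 0 < m)
    (h₁ : μ {x | m ≤ x 0} < 1 / 2)
    (h₂ : μ {x | x 0 ≤ -m} < 1 / 2) :
    ∃ v : Measure ((ℤ → ℝ) × mZ m), IsProbabilityMeasure v ∧
      v.map Prod.fst = μ ∧ v.map (skewProd (deltaF m)) = v := by
  have hθ : MeasurePreserving (shiftEquiv ℝ) μ μ := ⟨(shiftEquiv ℝ).measurable, hinv⟩
  have hμ : Ergodic (shiftEquiv ℝ) μ := ergodic_of_measure_eq_zero_or_one hθ herg
  have : IsProbabilityMeasure (μ.map (·, (0 : mZ m))) :=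
    Measure.isProbabilityMeasure_map measurable_prodMk_right.aemeasurable
  refine exists_invariant_measure_of_tight hθ (measurable_skewProd measurable_deltaF)
    semiconj_skewProd _ ?_ fun ε hε => deltaModulation_tight hμ hm h₁ h₂ hε
  rw [Measure.map_map measurable_fst measurable_prodMk_right]
  exact Measure.map_id
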